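/- Let λ > 1 and let K(λ) = -2(λ²-1)^{3/2}/(2√(λ²-1)+π+2arcsin(1/λ))·(1/(λ-1))·(λ-1). Then the function λ ↦ K(λ)/λ is strictly decreasing in λ on (1,∞). -/

import Mathlib

open Real

noncomputable def Kl (lam : ℝ) : ℝ :=
  -2 * Real.sqrt ((lam ^ 2 - 1) ^ 3) /
    (2 * Real.sqrt (lam ^ 2 - 1) + Real.pi + 2 * Real.arcsin (1 / lam))

noncomputable def ff (x : ℝ) : ℝ :=
  -2 * (Real.sqrt (x ^ 2 - 1)) ^ 3 /
    (x * (2 * Real.sqrt (x ^ 2 - 1) + Real.pi + 2 * Real.arcsin (1 / x)))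

lemma ff_eq {x : ℝ} (hx : 1 < x) : Kl x / x = ff x := by
  have h0 : (0:ℝ) ≤ x ^ 2 - 1 := by nlinarith
  have hsq : Real.sqrt ((x ^ 2 - 1) ^ 3) = (Real.sqrt (x ^ 2 - 1)) ^ 3 := by
    rw [show (x ^ 2 - 1) ^ 3 = ((Real.sqrt (x ^ 2 - 1)) ^ 3) ^ 2 by
      rw [← pow_mul, pow_mul', Real.sq_sqrt h0]]
    exact Real.sqrt_sq (pow_nonneg (Real.sqrt_nonneg _) 3)
  unfold Kl ff
  rw [hsq, div_div, mul_comm]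
  ring

lemma ff_hasDeriv {x : ℝ} (hx : 1 < x) :
    HasDerivAt ff
      (((-6 * x * Real.sqrt (x ^ 2 - 1)) *
          (x * (2 * Real.sqrt (x ^ 2 - 1) + Real.pi + 2 * Real.arcsin (1 / x))) -
        (-2 * (Real.sqrt (x ^ 2 - 1)) ^ 3) *
          ((2 * Real.sqrt (x ^ 2 - 1) + Real.pi + 2 * Real.arcsin (1 / x)) +
            2 * Real.sqrt (x ^ 2 - 1))) /
        (x * (2 * Real.sqrt (x ^ 2 - 1) + Real.pi + 2 * Real.arcsin (1 / x))) ^ 2) x := by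
  have hx0 : (0:ℝ) < x := lt_trans one_pos hx
  have h0 : (0:ℝ) < x ^ 2 - 1 := by nlinarith
  set s := Real.sqrt (x ^ 2 - 1) with hs_def
  have hs2 : s ^ 2 = x ^ 2 - 1 := Real.sq_sqrt h0.le
  have hs : 0 < s := Real.sqrt_pos.mpr h0
  -- derivative of sqrt(y^2-1)
  have hsder : HasDerivAt (fun y : ℝ => Real.sqrt (y ^ 2 - 1)) (x / s) x := by
    have h1 : HasDerivAt (fun y : ℝ => y ^ 2 - 1) (2 * x) x := by
      simpa using (hasDerivAt_pow 2 x).sub_const 1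
    have := (Real.hasDerivAt_sqrt (ne_of_gt h0)).comp x h1
    refine this.congr_deriv (Eq.symm ?_)
    field_simp
    ring
  -- derivative of arcsin (1/y)
  have harc : HasDerivAt (fun y : ℝ => Real.arcsin (1 / y)) (-(1 / (x * s))) x := by
    have hinv : HasDerivAt (fun y : ℝ => 1 / y) (-(1 / x ^ 2)) x := by
      simpa using (hasDerivAt_inv (ne_of_gt hx0))
    have h1 : (1 / x : ℝ) ≠ -1 := by
      have : (0:ℝ) < 1 / x := by positivity
      linarith
    have h2 : (1 / x : ℝ) ≠ 1 := by
      have : (1:ℝ) / x < 1 := by rw [div_lt_one hx0]; linarith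
      linarith
    have := (Real.hasDerivAt_arcsin h1 h2).comp x hinv
    have hss : Real.sqrt (1 - (1 / x) ^ 2) = s / x := by
      rw [show (1 : ℝ) - (1 / x) ^ 2 = (x ^ 2 - 1) / x ^ 2 by field_simp]
      rw [Real.sqrt_div h0.le, Real.sqrt_sq hx0.le]
    refine this.congr_deriv (Eq.symm ?_)
    rw [hss]
    field_simp
  -- derivative of denominator inner function D
  have hDder : HasDerivAt
      (fun y : ℝ => 2 * Real.sqrt (y ^ 2 - 1) + Real.pi + 2 * Real.arcsin (1 / y))
      (2 * s / x) x := by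
    have := ((hsder.const_mul 2).add_const Real.pi).add (harc.const_mul 2)
    refine this.congr_deriv (Eq.symm ?_)
    field_simp
    linear_combination hs2
  -- derivative of numerator
  have hNder : HasDerivAt (fun y : ℝ => -2 * (Real.sqrt (y ^ 2 - 1)) ^ 3) (-6 * x * s) x := by
    have := ((hsder.pow 3).const_mul (-2 : ℝ))
    refine this.congr_deriv (Eq.symm ?_)
    field_simp
    linear_combination (0 : ℝ) * hs2
  -- derivative of denominator y * D y
  have hMder : HasDerivAt
      (fun y : ℝ => y * (2 * Real.sqrt (y ^ 2 - 1) + Real.pi + 2 * Real.arcsin (1 / y)))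
      ((2 * s + Real.pi + 2 * Real.arcsin (1 / x)) + 2 * s) x := by
    have := (hasDerivAt_id x).mul hDder
    refine this.congr_deriv (Eq.symm ?_)
    field_simp
    rw [← hs_def, id_eq]
    ring
  have hD : 0 < 2 * s + Real.pi + 2 * Real.arcsin (1 / x) := by
    have ha : 0 < Real.arcsin (1 / x) := Real.arcsin_pos.mpr (by positivity)
    have := Real.pi_pos
    linarith
  have hM : x * (2 * s + Real.pi + 2 * Real.arcsin (1 / x)) ≠ 0 := by positivity
  exact hNder.div hMder hM

lemma ff_deriv_neg {x : ℝ} (hx : 1 < x) : deriv ff x < 0 := by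
  have hx0 : (0:ℝ) < x := lt_trans one_pos hx
  have h0 : (0:ℝ) < x ^ 2 - 1 := by nlinarith
  set s := Real.sqrt (x ^ 2 - 1) with hs_def
  have hs2 : s ^ 2 = x ^ 2 - 1 := Real.sq_sqrt h0.le
  have hs : 0 < s := Real.sqrt_pos.mpr h0
  have ha : 0 < Real.arcsin (1 / x) := Real.arcsin_pos.mpr (by positivity)
  have hpi := Real.pi_pos
  have hD : 0 < 2 * s + Real.pi + 2 * Real.arcsin (1 / x) := by linarith
  rw [(ff_hasDeriv hx).deriv]
  apply div_neg_of_neg_of_pos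
  · set D := 2 * s + Real.pi + 2 * Real.arcsin (1 / x) with hD_def
    have hDgt : 2 * s < D := by rw [hD_def]; linarith
    nlinarith [mul_pos hs hD, mul_pos hx0 hD, sq_nonneg s, mul_pos (mul_pos hs hs) hD,
      mul_pos hs (mul_pos hs hs)]
  · positivity

/-- The maximum value `φ_{K(λ)}(±1) = K(λ)/λ` of the explicit profile is
strictly decreasing in `λ` on `(1, ∞)`. -/
theorem K_over_lambda_strictAnti :
    StrictAntiOn (fun lam : ℝ => Kl lam / lam) (Set.Ioi (1 : ℝ)) := by
  have key : StrictAntiOn ff (Set.Ioi (1 : ℝ)) := by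
    apply strictAntiOn_of_deriv_neg (convex_Ioi 1)
    · intro x hx
      exact ((ff_hasDeriv hx).differentiableAt.continuousAt).continuousWithinAt
    · intro x hx
      rw [interior_Ioi] at hx
      exact ff_deriv_neg hx
  intro a ha b hb hab
  simp only
  rw [ff_eq ha, ff_eq hb]
  exact key ha hb hab
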